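/- Let L be a Lie algebra over a field F of characteristic different from 3. If L is a CB-algebra, then L³ = 0, i.e., ⁅x,⁅y,z⁆⁆ = 0 for all x, y, z ∈ L (so L is nilpotent of class at most 2). -/

import Mathlib

/-!
Taking `y = x` in the CB condition gives the 2-Engel identity `⁅⁅x, z⁆, x⁆ = 0`. Its
linearization `⁅⁅b, c⁆, a⁆ = -⁅⁅a, c⁆, b⁆` turns the Jacobi identity into
`⁅⁅a, b⁆, c⁆ = 2 ⁅⁅a, c⁆, b⁆`; applied twice this gives `⁅⁅a, b⁆, c⁆ = 4 ⁅⁅a, b⁆, c⁆`,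
so `3 ⁅⁅a, b⁆, c⁆ = 0` and all triple brackets vanish once `3` is invertible.
-/

section TwoEngel

variable {L : Type*} [LieRing L] (hengel : ∀ a b : L, ⁅⁅a, b⁆, a⁆ = 0)
include hengel

theorem lie_lie_swap_eq_neg_of_engel (a b c : L) : ⁅⁅b, c⁆, a⁆ = -⁅⁅a, c⁆, b⁆ := by
  have h := hengel (a + b) c
  rw [add_lie, add_lie, lie_add, lie_add, hengel, hengel, zero_add, add_zero] at h
  exact eq_neg_of_add_eq_zero_right h

theorem lie_lie_eq_two_nsmul_of_engel (a b c : L) : ⁅⁅a, b⁆, c⁆ = 2 • ⁅⁅a, c⁆, b⁆ := by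
  rw [lie_lie, ← lie_skew a ⁅b, c⁆, ← lie_skew b ⁅a, c⁆,
    lie_lie_swap_eq_neg_of_engel hengel a b c, lie_lie_swap_eq_neg_of_engel hengel b a c, two_nsmul]
  abel

theorem three_nsmul_lie_lie_eq_zero_of_engel (a b c : L) : 3 • ⁅⁅a, b⁆, c⁆ = 0 := by
  have h : ⁅⁅a, b⁆, c⁆ = 4 • ⁅⁅a, b⁆, c⁆ := by
    conv_lhs => rw [lie_lie_eq_two_nsmul_of_engel hengel a b c,
      lie_lie_eq_two_nsmul_of_engel hengel a c b, smul_smul]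
    rfl
  calc 3 • ⁅⁅a, b⁆, c⁆ = 4 • ⁅⁅a, b⁆, c⁆ - ⁅⁅a, b⁆, c⁆ := by abel
    _ = 0 := by rw [← h, sub_self]

theorem lie_lie_eq_zero_of_engel {F : Type*} [Field F] [LieAlgebra F L] (h3 : (3 : F) ≠ 0)
    (a b c : L) : ⁅⁅a, b⁆, c⁆ = 0 := by
  have h : (3 : F) • ⁅⁅a, b⁆, c⁆ = 0 := by
    rw [ofNat_smul_eq_nsmul F 3, three_nsmul_lie_lie_eq_zero_of_engel hengel]
  exact (smul_eq_zero.mp h).resolve_left h3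

end TwoEngel

theorem stmt_11 (F : Type*) [Field F] (h3 : (3 : F) ≠ 0)
    (L : Type*) [LieRing L] [LieAlgebra F L]
    (hcb : ∀ x y : L, ⁅x, y⁆ = 0 → ∀ z : L, ⁅⁅x, z⁆, y⁆ = 0) :
    ∀ x y z : L, ⁅x, ⁅y, z⁆⁆ = 0 := by
  have hengel : ∀ a b : L, ⁅⁅a, b⁆, a⁆ = 0 := fun a b => hcb a a (lie_self a) b
  intro x y z
  rw [← lie_skew, lie_lie_eq_zero_of_engel hengel h3, neg_zero]
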